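/- Consider F(o) = Σ_{j=1}^{m} min(‖q_j − o‖² − δ, 0) on ℝᵈ, where q₁, …, q_m ∈ ℝᵈ. If the points q_j are partitioned into clusters such that points inside a cluster are within distance √δ/2 of the cluster centroid, and distinct cluster centroids are at distance greater than 3√δ from each other, then each cluster centroid region contains a local minimum of F, and F restricted to the ball of radius √δ/2 around a cluster centroid equals Σ over that cluster's points of (‖q_j − o‖² − δ), whose unique minimizer is the cluster centroid. -/

import Mathlib

/-- Local minimums of the truncated-L2 proposal distance function correspond to clusters of
predicted primitives: if the points `q j` form clusters within `√δ/2` of their centroids and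
distinct centroids are more than `3√δ` apart, then on the ball of radius `√δ/2` around each
centroid, `F` equals the sum of the untruncated terms of that cluster, the centroid is a
local minimum of `F`, and it is the unique minimizer of `F` on that ball. -/
theorem stmt10 {d m K : ℕ} (q : Fin m → EuclideanSpace ℝ (Fin d))
    (δ : ℝ) (hδ : 0 < δ)
    (F : EuclideanSpace ℝ (Fin d) → ℝ)
    (hF : ∀ o, F o = ∑ j : Fin m, min (‖q j - o‖ ^ 2 - δ) 0)
    (k : Fin m → Fin K) (μc : Fin K → EuclideanSpace ℝ (Fin d))
    (hne : ∀ t, (Finset.univ.filter fun j => k j = t).Nonempty)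
    (hcent : ∀ t, μc t = (((Finset.univ.filter fun j => k j = t).card : ℝ))⁻¹ •
      ∑ j ∈ Finset.univ.filter (fun j => k j = t), q j)
    (hclose : ∀ j, ‖q j - μc (k j)‖ ≤ Real.sqrt δ / 2)
    (hsep : ∀ t t', t ≠ t' → 3 * Real.sqrt δ < ‖μc t - μc t'‖) :
    ∀ t : Fin K,
      (∀ o ∈ Metric.closedBall (μc t) (Real.sqrt δ / 2),
        F o = ∑ j ∈ Finset.univ.filter (fun j => k j = t), (‖q j - o‖ ^ 2 - δ)) ∧
      IsLocalMin F (μc t) ∧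
      (∀ o ∈ Metric.closedBall (μc t) (Real.sqrt δ / 2), o ≠ μc t → F (μc t) < F o) := by
  intro t
  set S := Finset.univ.filter (fun j => k j = t) with hSdef
  have hcardpos : (0:ℝ) < (S.card : ℝ) := by exact_mod_cast Finset.card_pos.mpr (hne t)
  have hsq : Real.sqrt δ ^ 2 = δ := Real.sq_sqrt hδ.le
  have hsqrtpos : 0 < Real.sqrt δ := Real.sqrt_pos.mpr hδ
  -- the formula on the ball
  have hformula : ∀ o ∈ Metric.closedBall (μc t) (Real.sqrt δ / 2),
      F o = ∑ j ∈ S, (‖q j - o‖ ^ 2 - δ) := by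
    intro o ho
    rw [Metric.mem_closedBall, dist_comm, dist_eq_norm] at ho
    rw [hF, ← Finset.sum_filter_add_sum_filter_not Finset.univ (fun j => k j = t)]
    have h1 : ∑ j ∈ S, min (‖q j - o‖ ^ 2 - δ) 0 = ∑ j ∈ S, (‖q j - o‖ ^ 2 - δ) := by
      apply Finset.sum_congr rfl
      intro j hj
      have hjk : k j = t := (Finset.mem_filter.mp hj).2
      have h2 : ‖q j - o‖ ≤ Real.sqrt δ := by
        have htri : ‖q j - o‖ ≤ ‖q j - μc t‖ + ‖μc t - o‖ := norm_sub_le_norm_sub_add_norm_sub _ _ _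
        have hc := hclose j
        rw [hjk] at hc
        linarith
      have : ‖q j - o‖ ^ 2 ≤ δ := by nlinarith [norm_nonneg (q j - o)]
      exact min_eq_left (by linarith)
    have h2 : ∑ j ∈ Finset.univ.filter (fun j => ¬ k j = t), min (‖q j - o‖ ^ 2 - δ) 0 = 0 := by
      apply Finset.sum_eq_zero
      intro j hj
      have hjk : k j ≠ t := (Finset.mem_filter.mp hj).2
      have hsep' := hsep (k j) t hjk
      have htri : ‖μc (k j) - μc t‖ ≤ ‖μc (k j) - q j‖ + ‖q j - o‖ + ‖o - μc t‖ := by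
        calc ‖μc (k j) - μc t‖ ≤ ‖μc (k j) - o‖ + ‖o - μc t‖ :=
              norm_sub_le_norm_sub_add_norm_sub _ _ _
          _ ≤ (‖μc (k j) - q j‖ + ‖q j - o‖) + ‖o - μc t‖ := by
              have := norm_sub_le_norm_sub_add_norm_sub (μc (k j)) (q j) o
              linarith
      have hc := hclose j
      rw [norm_sub_rev] at hc
      have hge : Real.sqrt δ ≤ ‖q j - o‖ := by
        have ho' : ‖o - μc t‖ ≤ Real.sqrt δ / 2 := by rwa [norm_sub_rev] at ho
        linarith
      have : δ ≤ ‖q j - o‖ ^ 2 := by nlinarith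
      exact min_eq_right (by linarith)
    rw [h1, h2, add_zero]
  -- the mean property
  have hmean : ∑ j ∈ S, (q j - μc t) = 0 := by
    rw [Finset.sum_sub_distrib, Finset.sum_const, sub_eq_zero]
    rw [hcent t, ← hSdef, ← Nat.cast_smul_eq_nsmul ℝ, smul_smul,
      mul_inv_cancel₀ hcardpos.ne', one_smul]
  -- variance identity
  have hvar : ∀ o : EuclideanSpace ℝ (Fin d), ∑ j ∈ S, ‖q j - o‖ ^ 2
      = ∑ j ∈ S, ‖q j - μc t‖ ^ 2 + (S.card : ℝ) * ‖μc t - o‖ ^ 2 := by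
    intro o
    have key : ∀ j : Fin m, ‖q j - o‖ ^ 2
        = ‖q j - μc t‖ ^ 2 + (2 * inner ℝ (q j - μc t) (μc t - o) + ‖μc t - o‖ ^ 2) := by
      intro j
      have h : q j - o = (q j - μc t) + (μc t - o) := by abel
      rw [h, norm_add_sq_real]
      ring
    simp_rw [key]
    rw [Finset.sum_add_distrib, Finset.sum_add_distrib, ← Finset.mul_sum, ← sum_inner, hmean,
      inner_zero_left, mul_zero, zero_add, Finset.sum_const, nsmul_eq_mul]
  -- comparison
  have hcomp : ∀ o ∈ Metric.closedBall (μc t) (Real.sqrt δ / 2),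
      F o = F (μc t) + (S.card : ℝ) * ‖μc t - o‖ ^ 2 := by
    intro o ho
    have hmem : μc t ∈ Metric.closedBall (μc t) (Real.sqrt δ / 2) := by
      simp [Metric.mem_closedBall]
      positivity
    rw [hformula o ho, hformula _ hmem]
    simp_rw [Finset.sum_sub_distrib]
    rw [hvar o]
    simp
    ring
  refine ⟨hformula, ?_, ?_⟩
  · have hball : Metric.closedBall (μc t) (Real.sqrt δ / 2) ∈ nhds (μc t) :=
      Metric.closedBall_mem_nhds _ (by positivity)
    filter_upwards [hball] with o ho
    rw [hcomp o ho]
    have : 0 ≤ (S.card : ℝ) * ‖μc t - o‖ ^ 2 := by positivity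
    linarith
  · intro o ho hne'
    rw [hcomp o ho]
    have : 0 < ‖μc t - o‖ := by
      rw [norm_pos_iff, sub_ne_zero]
      exact fun h => hne' h.symm
    have hpos : 0 < (S.card : ℝ) * ‖μc t - o‖ ^ 2 := mul_pos hcardpos (pow_pos this 2)
    linarith
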